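/- Let M = U_{n,r} be the uniform matroid with 0 < r < n and let F be a flag of type (α_1,…,α_k) ⊨ n. Set i_0 = min{i : α_1+⋯+α_i ≥ r}, r' = α_1+⋯+α_{i_0−1}, r'' = r'+α_{i_0}. Then the matroid M/F attached to the face π_{P_M}(F) decomposes as M/F = U_{r',r'} ⊕ U_{α_{i_0}, r−r'} ⊕ U_{n−r'',0}, and consequently rk_{P_M}(F) = dim(P_{M/F}) = 0 if r = r'' and rk_{P_M}(F) = α_{i_0} − 1 if r < r''. -/

import Mathlib

open scoped Classical Pointwise BigOperators


/-- The dot product pairing on `ℝⁿ`. -/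
def dotp {n : ℕ} (ω x : Fin n → ℝ) : ℝ := ∑ i, ω i * x i

/-- The set of points of `Q` on which the linear functional `⟨ω, ·⟩` attains its maximum. -/
def argmaxSet {n : ℕ} (Q : Set (Fin n → ℝ)) (ω : Fin n → ℝ) : Set (Fin n → ℝ) :=
  {x | x ∈ Q ∧ ∀ y ∈ Q, dotp ω y ≤ dotp ω x}

/-- `G` is a face of `Q` : it is the argmax set of some linear functional. -/
def IsFace {n : ℕ} (Q G : Set (Fin n → ℝ)) : Prop := ∃ ω : Fin n → ℝ, G = argmaxSet Q ω

/-- The dimension of a convex body: the rank of its direction vector space. -/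
noncomputable def pdim {n : ℕ} (s : Set (Fin n → ℝ)) : ℕ := Module.finrank ℝ (vectorSpan ℝ s)

/-- `Q` is a (nonempty) convex polytope. -/
def IsPolytope {n : ℕ} (Q : Set (Fin n → ℝ)) : Prop :=
  ∃ V : Finset (Fin n → ℝ), V.Nonempty ∧ Q = convexHull ℝ (V : Set (Fin n → ℝ))

/-- A flag `∅ ⊂ F₁ ⊂ ⋯ ⊂ F_k ⊂ [n]` of subsets of `[n]`, recorded by its set
`C = {F₁,…,F_k}` of proper nonempty intermediate subsets, which form a chain. -/
def IsFlag (n : ℕ) (C : Finset (Finset (Fin n))) : Prop :=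
  (∀ A ∈ C, A.Nonempty ∧ A ≠ Finset.univ) ∧ (∀ A ∈ C, ∀ B ∈ C, A ⊆ B ∨ B ⊆ A)

/-- The level of an element: the number of members of the chain not containing it.  Elements of
`F_i ∖ F_{i-1}` have level `i - 1`-ish: level `0` on the smallest set, etc. -/
def lv {n : ℕ} (C : Finset (Finset (Fin n))) (p : Fin n) : ℕ := (C.filter (fun A => p ∉ A)).card

/-- The `j`-th member `F_j` of the full chain `∅ = F₀ ⊂ F₁ ⊂ ⋯ ⊂ F_{k+1} = [n]` of the flag. -/
def fullChain {n : ℕ} (C : Finset (Finset (Fin n))) (j : ℕ) : Finset (Fin n) :=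
  Finset.univ.filter (fun p => lv C p < j)

/-- The type of a flag: the composition `(|F₁|-|F₀|, …, |F_{k+1}|-|F_k|)` of `n`. -/
def flagType {n : ℕ} (C : Finset (Finset (Fin n))) : List ℕ :=
  (List.range (C.card + 1)).map (fun j => (fullChain C (j + 1)).card - (fullChain C j).card)

/-- The relative interior of the braid cone of a flag: weight vectors `ω` that are constant on
each block `F_i ∖ F_{i-1}` and satisfy `ω|_{F_{i+1}∖F_i} < ω|_{F_i∖F_{i-1}}` (strictly
decreasing along the flag). -/
def relintBraidCone {n : ℕ} (C : Finset (Finset (Fin n))) : Set (Fin n → ℝ) :=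
  {x | ∀ p q : Fin n, ((∀ A ∈ C, (p ∈ A ↔ q ∈ A)) → x p = x q) ∧
      ((∃ A ∈ C, p ∈ A ∧ q ∉ A) → x q < x p)}

/-- Homogeneous quasisymmetric functions in the monomial basis: finitely supported
coefficient functions on compositions (lists of positive integers). -/
abbrev QS : Type := (List ℕ) →₀ ℚ

/-- The monomial quasisymmetric function `M_α`. -/
noncomputable def Mc (l : List ℕ) : QS := Finsupp.single l 1

/-- The principal specialization at `-1`:  `ps(M_α)(-1) = (-1)^{k(α)}`, extended linearly. -/
noncomputable def psNeg (f : QS) : ℚ := f.sum (fun l c => c * (-1) ^ l.length)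

/-- The `f`-polynomial of a polytope `P ⊆ ℝⁿ`, evaluated at `t`. -/
noncomputable def fPoly {n : ℕ} (P : Set (Fin n → ℝ)) (t : ℚ) : ℚ :=
  ∑ i ∈ Finset.range n, ((Set.ncard {G : Set (Fin n → ℝ) | IsFace P G ∧ pdim G = i} : ℚ) * t ^ i)

/-- The weighted quasisymmetric enumerator `F_q(Q) = Σ_F q^{rk(F)} M_{type(F)}`, where the rank
statistic `rk` on flags is given as an argument. -/
noncomputable def FqEnum (n : ℕ) (rk : Finset (Finset (Fin n)) → ℕ) (q : ℚ) : QS :=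
  ∑ C : Finset (Finset (Fin n)), if IsFlag n C then q ^ (rk C) • Mc (flagType C) else 0

/-- A matroid on `[n]`, given by its nonempty collection of bases satisfying the exchange
property. -/
def IsMatroid (n : ℕ) (𝓑 : Finset (Finset (Fin n))) : Prop :=
  𝓑.Nonempty ∧
    ∀ B₁ ∈ 𝓑, ∀ B₂ ∈ 𝓑, ∀ i ∈ B₁ \ B₂, ∃ j ∈ B₂ \ B₁, insert j (B₁.erase i) ∈ 𝓑

/-- The indicator vector `e_B = Σ_{i ∈ B} e_i` of a subset `B ⊆ [n]`. -/
def indVec {n : ℕ} (B : Finset (Fin n)) : Fin n → ℝ := fun i => if i ∈ B then 1 else 0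

/-- The matroid base polytope `P_M = Conv{e_B : B ∈ 𝓑(M)}`. -/
noncomputable def basePoly {n : ℕ} (𝓑 : Finset (Finset (Fin n))) : Set (Fin n → ℝ) :=
  convexHull ℝ (indVec '' (𝓑 : Set (Finset (Fin n))))

/-- The basis-exchange relation whose equivalence classes are the connected components of the
matroid: `i ~ j` iff there are bases `B₁, B₂` with `i ∈ B₁` and `B₂ = (B₁ ∖ {i}) ∪ {j}`. -/
def mRel {n : ℕ} (𝓑 : Finset (Finset (Fin n))) (i j : Fin n) : Prop :=
  ∃ B₁ ∈ 𝓑, i ∈ B₁ ∧ insert j (B₁.erase i) ∈ 𝓑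

/-- The number of connected components of (the matroid with bases) `𝓑` that meet the ground set
`ground`: the number of equivalence classes of the component relation restricted to `ground`. -/
noncomputable def cOn {n : ℕ} (ground : Finset (Fin n)) (𝓑 : Finset (Finset (Fin n))) : ℕ :=
  Set.ncard (Quot.mk (mRel 𝓑) '' (ground : Set (Fin n)))

/-- A subset is independent if it is contained in a basis. -/
def mIndep {n : ℕ} (𝓑 : Finset (Finset (Fin n))) (I : Finset (Fin n)) : Prop :=
  ∃ B ∈ 𝓑, I ⊆ B

/-- The bases of the restriction `M|_A`: maximal independent subsets of `A`. -/
noncomputable def basesRestrict {n : ℕ} (𝓑 : Finset (Finset (Fin n))) (A : Finset (Fin n)) :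
    Finset (Finset (Fin n)) :=
  A.powerset.filter (fun I => mIndep 𝓑 I ∧ ∀ J ∈ A.powerset, mIndep 𝓑 J → I ⊆ J → I = J)

/-- The bases of the contraction `M/A`: sets `I` disjoint from `A` such that `I ∪ B_A` is a basis
for some basis `B_A` of `M|_A`. -/
noncomputable def basesContract {n : ℕ} (𝓑 : Finset (Finset (Fin n))) (A : Finset (Fin n)) :
    Finset (Finset (Fin n)) :=
  (Finset.univ : Finset (Fin n)).powerset.filter
    (fun I => Disjoint I A ∧ ∃ BA ∈ basesRestrict 𝓑 A, I ∪ BA ∈ 𝓑)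

/-- The bases of the minor `(M|_X)/Y`. -/
noncomputable def minorBases {n : ℕ} (𝓑 : Finset (Finset (Fin n))) (X Y : Finset (Fin n)) :
    Finset (Finset (Fin n)) :=
  basesContract (basesRestrict 𝓑 X) Y

/-- The rank `r(A)` of a subset `A`: the size of a basis of `M|_A`. -/
noncomputable def rankOf {n : ℕ} (𝓑 : Finset (Finset (Fin n))) (A : Finset (Fin n)) : ℕ :=
  (basesRestrict 𝓑 A).sup Finset.card

/-- The bases of the matroid `M/F = M_ω` attached to a flag `F` (for any `ω` in the relative
interior of the braid cone of `F`): the bases of maximum `ω`-weight, i.e. those `B` with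
`|B ∩ F_i| = r(F_i)` for every member `F_i` of the full chain of the flag. -/
noncomputable def flagQuotBases {n : ℕ} (𝓑 : Finset (Finset (Fin n))) (C : Finset (Finset (Fin n))) :
    Finset (Finset (Fin n)) :=
  𝓑.filter (fun B => ∀ j ∈ Finset.range (C.card + 2), (B ∩ fullChain C j).card = rankOf 𝓑 (fullChain C j))

/-- The rank statistic `rk_{P_M}(F) = Σ_j rk((M|_{F_j})/F_{j-1})` of a flag, where
`rk(N) = (size of ground set of N) - c(N)`. -/
noncomputable def rkM {n : ℕ} (𝓑 : Finset (Finset (Fin n))) (C : Finset (Finset (Fin n))) : ℕ :=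
  ∑ j ∈ Finset.range (C.card + 1),
    ((fullChain C (j + 1)).card - (fullChain C j).card -
      cOn ((fullChain C (j + 1)) \ (fullChain C j))
        (minorBases 𝓑 (fullChain C (j + 1)) (fullChain C j)))

/-- The bases of the uniform matroid `U_{n,r}`: all `r`-element subsets of `[n]`. -/
def uniformBases (n r : ℕ) : Finset (Finset (Fin n)) :=
  (Finset.univ : Finset (Fin n)).powersetCard r

/-! The face of `P_{U_{n,r}}` selected by a flag consists of the `r`-sets `B` with
`|B ∩ F_j| = min(|F_j|, r)` for all `j`.  As `|B ∩ A| = |A|` forces `A ⊆ B` and `|B ∩ A| = |B|`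
forces `B ⊆ A`, these are exactly the `r`-sets with `F_{i₀-1} ⊆ B ⊆ F_{i₀}`.  Their indicator
vectors are `e_{F_{i₀-1}}` plus the vertices of a hypersimplex on the block
`S = F_{i₀} ∖ F_{i₀-1}`; when `r < |F_{i₀}|` any two elements of the block can be swapped, so the
direction space is spanned by the `|S| - 1` independent vectors `e_i - e_k`, `i ∈ S ∖ {k}`. -/

namespace Finset

variable {α : Type*} [DecidableEq α]

lemma card_inter_eq_card_left_iff {s t : Finset α} : #(s ∩ t) = #s ↔ s ⊆ t := by
  rw [← inter_eq_left]
  exact ⟨fun h => eq_of_subset_of_card_le inter_subset_left h.ge, congrArg card⟩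

lemma card_inter_eq_card_right_iff {s t : Finset α} : #(s ∩ t) = #t ↔ t ⊆ s := by
  rw [inter_comm, card_inter_eq_card_left_iff]

end Finset

open Finset

lemma Nat.sInf_setOf_le_spec {f : ℕ → ℕ} {r N : ℕ} (h0 : f 0 < r) (hN : r ≤ f N) :
    f (sInf {i | r ≤ f i} - 1) < r ∧ r ≤ f (sInf {i | r ≤ f i}) ∧ sInf {i | r ≤ f i} ≤ N := by
  have hle : r ≤ f (sInf {i | r ≤ f i}) := Nat.sInf_mem (⟨N, hN⟩ : {i | r ≤ f i}.Nonempty)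
  refine ⟨?_, hle, Nat.sInf_le hN⟩
  by_contra! h
  have hpred : sInf {i | r ≤ f i} ≤ sInf {i | r ≤ f i} - 1 := Nat.sInf_le h
  have hzero : sInf {i | r ≤ f i} = 0 := by omega
  rw [hzero] at hle
  omega

lemma forall_card_inter_eq_min_iff {α : Type*} [DecidableEq α] {F : ℕ → Finset α}
    (hF : Monotone F) {B : Finset α} {i₀ N : ℕ} (hlt : #(F (i₀ - 1)) < #B)
    (hle : #B ≤ #(F i₀)) (hN : i₀ < N) :
    (∀ j ∈ range N, #(B ∩ F j) = min #(F j) #B) ↔ F (i₀ - 1) ⊆ B ∧ B ⊆ F i₀ := by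
  have hi₀ : i₀ - 1 < i₀ := by
    by_contra! h
    have : F i₀ ⊆ F (i₀ - 1) := hF h
    exact absurd (hlt.trans_le hle) (not_lt.mpr (card_le_card this))
  constructor
  · intro h
    have hbelow := h (i₀ - 1) (mem_range.mpr (by omega))
    have habove := h i₀ (mem_range.mpr hN)
    rw [min_eq_left hlt.le, card_inter_eq_card_right_iff] at hbelow
    rw [min_eq_right hle, card_inter_eq_card_left_iff] at habove
    exact ⟨hbelow, habove⟩
  · rintro ⟨hbelow, habove⟩ j -
    rcases lt_or_ge j i₀ with hj | hj
    · have hsub : F j ⊆ F (i₀ - 1) := hF (by omega)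
      rw [min_eq_left ((card_le_card hsub).trans hlt.le), card_inter_eq_card_right_iff]
      exact hsub.trans hbelow
    · rw [min_eq_right (hle.trans (card_le_card (hF hj))), card_inter_eq_card_left_iff]
      exact habove.trans (hF hj)

section Flags

variable {n : ℕ}

lemma fullChain_mono (C : Finset (Finset (Fin n))) : Monotone (fullChain C) :=
  fun _ _ h _ hp => by
    simp only [fullChain, mem_filter] at hp ⊢
    exact ⟨hp.1, hp.2.trans_le h⟩

@[simp]
lemma fullChain_zero (C : Finset (Finset (Fin n))) : fullChain C 0 = ∅ := by
  simp [fullChain]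

@[simp]
lemma fullChain_card_add_one (C : Finset (Finset (Fin n))) : fullChain C (#C + 1) = univ := by
  ext p
  simp only [fullChain, mem_filter, mem_univ, true_and, iff_true]
  exact Nat.lt_succ_of_le (card_filter_le C _)

end Flags

section Uniform

variable {n r : ℕ}

@[simp]
lemma mem_uniformBases {B : Finset (Fin n)} : B ∈ uniformBases n r ↔ #B = r := by
  simp [uniformBases]

lemma mIndep_uniformBases_iff (hrn : r ≤ n) {I : Finset (Fin n)} :
    mIndep (uniformBases n r) I ↔ #I ≤ r := by
  constructor
  · rintro ⟨B, hB, hIB⟩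
    exact mem_uniformBases.mp hB ▸ card_le_card hIB
  · intro h
    obtain ⟨B, hIB, -, hB⟩ := exists_subsuperset_card_eq (subset_univ I) h (by simpa using hrn)
    exact ⟨B, mem_uniformBases.mpr hB, hIB⟩

lemma rankOf_uniformBases (hrn : r ≤ n) (A : Finset (Fin n)) :
    rankOf (uniformBases n r) A = min #A r := by
  apply le_antisymm
  · refine Finset.sup_le fun I hI => ?_
    simp only [basesRestrict, mem_filter, mem_powerset] at hI
    exact le_min (card_le_card hI.1) ((mIndep_uniformBases_iff hrn).mp hI.2.1)
  · obtain ⟨I, hIA, hI⟩ := exists_subset_card_eq (min_le_left #A r)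
    have hbasis : I ∈ basesRestrict (uniformBases n r) A := by
      simp only [basesRestrict, mem_filter, mem_powerset]
      refine ⟨hIA, (mIndep_uniformBases_iff hrn).mpr (hI ▸ min_le_right _ _), ?_⟩
      intro J hJA hJ hIJ
      refine eq_of_subset_of_card_le hIJ ?_
      rw [hI]
      exact le_min (card_le_card hJA) ((mIndep_uniformBases_iff hrn).mp hJ)
    exact hI ▸ le_sup hbasis

end Uniform

section IndicatorVectors

variable {n : ℕ}

lemma indVec_insert {i : Fin n} {A : Finset (Fin n)} (hi : i ∉ A) :
    indVec (insert i A) = Pi.single i 1 + indVec A := by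
  funext j
  by_cases hj : j = i
  · subst hj
    simp [indVec, hi]
  · simp [indVec, hj]

lemma indVec_eq_sum_single (B : Finset (Fin n)) : indVec B = ∑ i ∈ B, Pi.single i (1 : ℝ) := by
  funext j
  simp [indVec, Finset.sum_apply, Pi.single_apply]

lemma indVec_sub_indVec (B B' : Finset (Fin n)) :
    indVec B - indVec B' = ∑ i ∈ B \ B', Pi.single i (1 : ℝ) - ∑ i ∈ B' \ B, Pi.single i 1 := by
  rw [indVec_eq_sum_single, indVec_eq_sum_single,
    ← sum_inter_add_sum_sdiff B B', ← sum_inter_add_sum_sdiff B' B, inter_comm B' B]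
  abel

lemma pdim_convexHull (s : Set (Fin n → ℝ)) : pdim (convexHull ℝ s) = pdim s := by
  rw [pdim, pdim, ← direction_affineSpan, affineSpan_convexHull, direction_affineSpan]

end IndicatorVectors

lemma linearIndependent_single_sub_single {ι R : Type*} [DecidableEq ι] [Ring R]
    (s : Finset ι) {k : ι} (hk : k ∉ s) :
    LinearIndependent R (fun i : s => (Pi.single (i : ι) (1 : R) - Pi.single k 1 : ι → R)) := by
  rw [Fintype.linearIndependent_iff]
  intro g hg j
  have hj := congrFun hg j
  have hjk : (j : ι) ≠ k := fun h => hk (h ▸ j.2)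
  simpa [Finset.sum_apply, Pi.single_apply, hjk] using hj

section Interval

variable {n r : ℕ} {F' F'' : Finset (Fin n)}

noncomputable abbrev blockDirections (S : Finset (Fin n)) (k : Fin n) : Submodule ℝ (Fin n → ℝ) :=
  Submodule.span ℝ (Set.range fun i : S.erase k => Pi.single (i : Fin n) (1 : ℝ) - Pi.single k 1)

lemma single_sub_single_mem_blockDirections {S : Finset (Fin n)} {k i : Fin n} (hi : i ∈ S) :
    Pi.single i (1 : ℝ) - Pi.single k 1 ∈ blockDirections S k := by
  by_cases h : i = k
  · simp [h]
  · exact Submodule.subset_span ⟨⟨i, mem_erase.mpr ⟨h, hi⟩⟩, rfl⟩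

lemma indVec_sub_indVec_mem_blockDirections {S B B' : Finset (Fin n)} {k : Fin n}
    (hcard : #B = #B') (hB : B \ B' ⊆ S) (hB' : B' \ B ⊆ S) :
    indVec B - indVec B' ∈ blockDirections S k := by
  have hsums : indVec B - indVec B' =
      ∑ i ∈ B \ B', (Pi.single i (1 : ℝ) - Pi.single k 1)
        - ∑ i ∈ B' \ B, (Pi.single i (1 : ℝ) - Pi.single k 1) := by
    rw [indVec_sub_indVec, sum_sub_distrib, sum_sub_distrib, sum_const, sum_const,
      card_sdiff_comm hcard]
    abel
  rw [hsums]
  exact sub_mem (Submodule.sum_mem _ fun i hi => single_sub_single_mem_blockDirections (hB hi))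
    (Submodule.sum_mem _ fun i hi => single_sub_single_mem_blockDirections (hB' hi))

/-- Witnessed by `insert i A` and `insert k A` for an `(r - 1)`-set `F' ⊆ A ⊆ F'' ∖ {i, k}`. -/
lemma single_sub_single_mem_vectorSpan (hsub : F' ⊆ F'') (h₁ : #F' < r) (h₂ : r < #F'')
    {i k : Fin n} (hi : i ∈ F'' \ F') (hk : k ∈ F'' \ F') (hne : i ≠ k) :
    Pi.single i (1 : ℝ) - Pi.single k 1 ∈
      vectorSpan ℝ (indVec '' ((uniformBases n r).filter (fun B => F' ⊆ B ∧ B ⊆ F'') : Set _)) := by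
  rw [mem_sdiff] at hi hk
  have hF'sub : F' ⊆ (F''.erase i).erase k := fun x hx =>
    mem_erase.mpr ⟨fun h => hk.2 (h ▸ hx), mem_erase.mpr ⟨fun h => hi.2 (h ▸ hx), hsub hx⟩⟩
  have hcard : r - 1 ≤ #((F''.erase i).erase k) := by
    rw [card_erase_of_mem (mem_erase.mpr ⟨hne.symm, hk.1⟩), card_erase_of_mem hi.1]
    omega
  obtain ⟨A, hF'A, hA, hAcard⟩ := exists_subsuperset_card_eq hF'sub (by omega) hcard
  have hkA : k ∉ A := fun h => by simpa using hA h
  have hiA : i ∉ A := fun h => by simpa using (mem_erase.mp (hA h)).2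
  have hAF'' : A ⊆ F'' := hA.trans ((erase_subset _ _).trans (erase_subset _ _))
  have hface : ∀ j ∈ F'', j ∉ A →
      insert j A ∈ (uniformBases n r).filter (fun B => F' ⊆ B ∧ B ⊆ F'') := fun j hj hjA => by
    simp only [mem_filter, mem_uniformBases, card_insert_of_notMem hjA, hAcard]
    exact ⟨by omega, hF'A.trans (subset_insert _ _), insert_subset hj hAF''⟩
  have hdiff := vsub_mem_vectorSpan ℝ (Set.mem_image_of_mem indVec (hface i hi.1 hiA))
    (Set.mem_image_of_mem indVec (hface k hk.1 hkA))
  rwa [vsub_eq_sub, indVec_insert hiA, indVec_insert hkA, add_sub_add_right_eq_sub] at hdiff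

lemma vectorSpan_indVec_interval (hsub : F' ⊆ F'') (h₁ : #F' < r) (h₂ : r < #F'')
    {k : Fin n} (hk : k ∈ F'' \ F') :
    vectorSpan ℝ (indVec '' ((uniformBases n r).filter (fun B => F' ⊆ B ∧ B ⊆ F'') : Set _)) =
      blockDirections (F'' \ F') k := by
  apply le_antisymm
  · rw [vectorSpan_def, Submodule.span_le]
    rintro _ ⟨_, ⟨B, hB, rfl⟩, _, ⟨B', hB', rfl⟩, rfl⟩
    simp only [coe_filter, mem_uniformBases, Set.mem_ofPred_eq] at hB hB'
    exact indVec_sub_indVec_mem_blockDirections (hB.1.trans hB'.1.symm)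
      (sdiff_subset_sdiff hB.2.2 hB'.2.1) (sdiff_subset_sdiff hB'.2.2 hB.2.1)
  · rw [Submodule.span_le]
    rintro _ ⟨⟨i, hi⟩, rfl⟩
    obtain ⟨hne, hi⟩ := mem_erase.mp hi
    exact single_sub_single_mem_vectorSpan hsub h₁ h₂ hi hk hne

lemma pdim_basePoly_interval (hsub : F' ⊆ F'') (h₁ : #F' < r) (h₂ : r ≤ #F'') :
    pdim (basePoly ((uniformBases n r).filter (fun B => F' ⊆ B ∧ B ⊆ F'')))
      = if r = #F'' then 0 else #F'' - #F' - 1 := by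
  rw [basePoly, pdim_convexHull]
  split_ifs with h
  · have hpoint : (uniformBases n r).filter (fun B => F' ⊆ B ∧ B ⊆ F'') = {F''} := by
      ext B
      simp only [mem_filter, mem_uniformBases, mem_singleton]
      constructor
      · rintro ⟨hB, -, hBF''⟩
        exact eq_of_subset_of_card_le hBF'' (by omega)
      · rintro rfl
        exact ⟨h.symm, hsub, subset_rfl⟩
    rw [hpoint, pdim, coe_singleton, Set.image_singleton, vectorSpan_singleton]
    exact finrank_bot ℝ _
  · obtain ⟨k, hk⟩ : (F'' \ F').Nonempty := by
      rw [← card_pos, card_sdiff_of_subset hsub]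
      omega
    rw [pdim, vectorSpan_indVec_interval hsub h₁ (lt_of_le_of_ne h₂ h) hk,
      finrank_span_eq_card (linearIndependent_single_sub_single _ (notMem_erase k _)),
      Fintype.card_coe, card_erase_of_mem hk, card_sdiff_of_subset hsub]

end Interval

theorem uniform_matroid_flag_face_general (n r : ℕ) (hr : 0 < r) (hrn : r < n)
    (C : Finset (Finset (Fin n))) :
    let i₀ : ℕ := sInf {i : ℕ | r ≤ (fullChain C i).card}
    flagQuotBases (uniformBases n r) C
        = (uniformBases n r).filter
            (fun B => fullChain C (i₀ - 1) ⊆ B ∧ B ⊆ fullChain C i₀) ∧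
    pdim (basePoly (flagQuotBases (uniformBases n r) C))
        = (if r = (fullChain C i₀).card then 0
           else ((fullChain C i₀).card - (fullChain C (i₀ - 1)).card) - 1) := by
  intro i₀
  obtain ⟨hbelow, habove, hi₀⟩ := Nat.sInf_setOf_le_spec (f := fun i => #(fullChain C i))
    (N := #C + 1) (by simpa using hr) (by simpa using hrn.le)
  have hfaces : flagQuotBases (uniformBases n r) C = (uniformBases n r).filter
      (fun B => fullChain C (i₀ - 1) ⊆ B ∧ B ⊆ fullChain C i₀) := by
    ext B
    simp only [flagQuotBases, mem_filter, mem_uniformBases, rankOf_uniformBases hrn.le]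
    refine and_congr_right fun hB => ?_
    subst hB
    exact forall_card_inter_eq_min_iff (fullChain_mono C) hbelow habove (by omega)
  refine ⟨hfaces, ?_⟩
  rw [hfaces]
  exact pdim_basePoly_interval (fullChain_mono C (Nat.sub_le _ _)) hbelow habove

/-- Let `M = U_{n,r}` be the uniform matroid with `0 < r < n` and let `F` be a
flag of type `(α₁,…,α_k) ⊨ n`.  With `i₀ = min{i : α₁+⋯+α_i ≥ r}`, `r' = α₁+⋯+α_{i₀-1}` and
`r'' = r' + α_{i₀}`, the matroid `M/F` attached to the face `π_{P_M}(F)` decomposes as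
`M/F = U_{r',r'} ⊕ U_{α_{i₀}, r-r'} ⊕ U_{n-r'',0}` — its bases are exactly the `r`-subsets `B`
with `F_{i₀-1} ⊆ B ⊆ F_{i₀}` — and consequently
`rk_{P_M}(F) = dim(P_{M/F}) = 0` if `r = r''` and `= α_{i₀} - 1` if `r < r''`. -/
theorem uniform_matroid_flag_face (n r : ℕ) (hr : 0 < r) (hrn : r < n)
    (C : Finset (Finset (Fin n))) (hC : IsFlag n C) :
    let i₀ : ℕ := sInf {i : ℕ | r ≤ (fullChain C i).card}
    flagQuotBases (uniformBases n r) C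
        = (uniformBases n r).filter
            (fun B => fullChain C (i₀ - 1) ⊆ B ∧ B ⊆ fullChain C i₀) ∧
    pdim (basePoly (flagQuotBases (uniformBases n r) C))
        = (if r = (fullChain C i₀).card then 0
           else ((fullChain C i₀).card - (fullChain C (i₀ - 1)).card) - 1) :=
  uniform_matroid_flag_face_general n r hr hrn C
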